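/- Let L ∈ ℝ^{n×n} be symmetric positive semidefinite, M > 0, D > 0, and set A = [[0_n, I_n], [−(1/M)L, −(D/M)I_n]], F = [0_n; (1/M)I_n], C = [L^{1/2}, 0_n]. Then the symmetric matrix P = [[(D/2)I_n + (M/(2D))L, (M/2)I_n], [(M/2)I_n, (M²/(2D))I_n]] satisfies the Lyapunov equation P·A + Aᵀ·P = −CᵀC, and trace(Fᵀ P F) = n/(2D). (Thus the H₂ norm of the swing dynamics with phase cohesiveness output is √(n/(2D)), independent of the inertia M and of the network topology.) -/

import Mathlib

open Matrix

/-- The swing-dynamics state matrix `A = [[0, I], [−(1/M)L, −(D/M)I]]`. -/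
noncomputable def swingA (n : ℕ) (M D : ℝ) (L : Matrix (Fin n) (Fin n) ℝ) :
    Matrix (Fin n ⊕ Fin n) (Fin n ⊕ Fin n) ℝ :=
  Matrix.fromBlocks 0 1 (-(1 / M) • L) (-(D / M) • 1)

/-- The swing-dynamics input matrix `F = [0; (1/M)I]`. -/
noncomputable def swingF (n : ℕ) (M : ℝ) : Matrix (Fin n ⊕ Fin n) (Fin n) ℝ :=
  Matrix.fromRows 0 ((1 / M) • 1)

/-- The positive semidefinite square root of a positive semidefinite matrix, as defined in
Mathlib of December 2024 (`Matrix.PosSemidef.sqrt`, since removed from Mathlib), for real matrices. -/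
noncomputable def Matrix.PosSemidef.sqrt {n : Type*} [Fintype n] [DecidableEq n]
    {A : Matrix n n ℝ} (hA : A.PosSemidef) : Matrix n n ℝ :=
  hA.1.eigenvectorUnitary.1 * diagonal ((↑) ∘ (√·) ∘ hA.1.eigenvalues) *
  (star hA.1.eigenvectorUnitary : Matrix n n ℝ)

/-- The phase cohesiveness output matrix `C = [L^{1/2}, 0]`, where `L^{1/2}`
is the positive semidefinite square root of `L`. -/
noncomputable def swingCphase (n : ℕ) {L : Matrix (Fin n) (Fin n) ℝ}
    (hL : L.PosSemidef) : Matrix (Fin n) (Fin n ⊕ Fin n) ℝ :=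
  Matrix.fromCols hL.sqrt 0

/-- The candidate observability Gramian
`P = [[(D/2)I + (M/(2D))L, (M/2)I], [(M/2)I, (M²/(2D))I]]`. -/
noncomputable def swingPphase (n : ℕ) (M D : ℝ)
    (L : Matrix (Fin n) (Fin n) ℝ) :
    Matrix (Fin n ⊕ Fin n) (Fin n ⊕ Fin n) ℝ :=
  Matrix.fromBlocks ((D / 2) • 1 + (M / (2 * D)) • L) ((M / 2) • 1)
    ((M / 2) • 1) ((M ^ 2 / (2 * D)) • 1)

/-! Since `P` is symmetric, `AᵀP = (PA)ᵀ`, so the Lyapunov equation only needs the single block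
product `PA = [[-L/2, (M/(2D))L], [-(M/(2D))L, 0]]`, whose symmetric part is `diag(-L, 0)`;
on the other side `CᵀC = diag(L, 0)` because `L^{1/2}` is symmetric with square `L`.
The trace is `(1/M)² · M²/(2D) · n`. -/

namespace Matrix.PosSemidef

variable {ι : Type*} [Fintype ι] [DecidableEq ι] {A : Matrix ι ι ℝ}

theorem transpose_sqrt (hA : A.PosSemidef) : hA.sqrtᵀ = hA.sqrt := by
  simp only [Matrix.PosSemidef.sqrt, transpose_mul, diagonal_transpose, star_eq_conjTranspose,
    conjTranspose_eq_transpose_of_trivial, transpose_transpose, Matrix.mul_assoc]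

theorem sqrt_mul_sqrt (hA : A.PosSemidef) : hA.sqrt * hA.sqrt = A := by
  set U : Matrix ι ι ℝ := hA.1.eigenvectorUnitary.1
  set S : Matrix ι ι ℝ := diagonal ((↑) ∘ (√·) ∘ hA.1.eigenvalues)
  have hUU : star U * U = 1 := Unitary.coe_star_mul_self _
  have hSS : S * S = diagonal ((↑) ∘ hA.1.eigenvalues) := by
    rw [diagonal_mul_diagonal]
    congr 1
    funext i
    simp [Real.mul_self_sqrt (hA.eigenvalues_nonneg i)]
  calc hA.sqrt * hA.sqrt = U * (S * (star U * U) * S) * star U := by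
        simp only [Matrix.PosSemidef.sqrt, U, S, Matrix.mul_assoc]
    _ = A := by
        rw [hUU, Matrix.mul_one, hSS]
        exact (hA.1.spectral_theorem.trans (Unitary.conjStarAlgAut_apply _ _)).symm

end Matrix.PosSemidef

section Swing

variable {n : ℕ} {M D : ℝ} {L : Matrix (Fin n) (Fin n) ℝ}

theorem swingCphase_transpose_mul_self (hL : L.PosSemidef) :
    (swingCphase n hL)ᵀ * swingCphase n hL = fromBlocks L 0 0 0 := by
  ext (i | i) (j | j) <;>
    simp [swingCphase, transpose_fromCols, hL.transpose_sqrt, hL.sqrt_mul_sqrt]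

theorem swingPphase_transpose (hL : Lᵀ = L) : (swingPphase n M D L)ᵀ = swingPphase n M D L := by
  simp [swingPphase, fromBlocks_transpose, hL]

theorem swingA_transpose_mul_swingPphase (hL : Lᵀ = L) :
    (swingA n M D L)ᵀ * swingPphase n M D L = (swingPphase n M D L * swingA n M D L)ᵀ := by
  rw [transpose_mul, swingPphase_transpose hL]

theorem swingPphase_mul_swingA (hM : M ≠ 0) (hD : D ≠ 0) :
    swingPphase n M D L * swingA n M D L =
      fromBlocks (-(1 / 2 : ℝ) • L) ((M / (2 * D)) • L) (-(M / (2 * D)) • L) 0 := by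
  simp only [swingPphase, swingA, fromBlocks_multiply, Matrix.mul_zero, Matrix.mul_one,
    Matrix.smul_mul, Matrix.mul_smul, Matrix.one_mul, smul_smul, zero_add, neg_mul]
  have e1 : 1 / M * (M / 2) = (1 / 2 : ℝ) := by field_simp
  have e2 : D / M * (M / 2) = D / 2 := by field_simp
  have e3 : 1 / M * (M ^ 2 / (2 * D)) = M / (2 * D) := by field_simp
  have e4 : D / M * (M ^ 2 / (2 * D)) = M / 2 := by field_simp
  rw [e1, e2, e3, e4]
  congr 1 <;> module

theorem trace_swingF_transpose_mul_swingPphase_mul (hM : M ≠ 0) :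
    ((swingF n M)ᵀ * swingPphase n M D L * swingF n M).trace = n / (2 * D) := by
  simp only [swingF, swingPphase, transpose_fromRows, fromCols_mul_fromBlocks,
    fromCols_mul_fromRows, Matrix.transpose_smul, Matrix.transpose_zero, Matrix.transpose_one,
    Matrix.zero_mul, Matrix.smul_mul, Matrix.mul_smul, Matrix.one_mul, Matrix.mul_one,
    zero_add, smul_zero, smul_smul, trace_smul, trace_one, Fintype.card_fin, smul_eq_mul]
  field_simp

end Swing

/-- Observability Gramian computation for the swing dynamics with phase
cohesiveness output: `P` satisfies the Lyapunov equation `PA + AᵀP = −CᵀC`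
and `trace(FᵀPF) = n/(2D)`.  Hence the H₂ norm with phase cohesiveness
output is `√(n/(2D))`, independent of the inertia `M` and of the network
topology. -/
theorem swing_phase_H2_gramian (n : ℕ) (M D : ℝ) (hM : 0 < M) (hD : 0 < D)
    (L : Matrix (Fin n) (Fin n) ℝ) (hL : L.PosSemidef) :
    swingPphase n M D L * swingA n M D L + (swingA n M D L)ᵀ * swingPphase n M D L =
      -((swingCphase n hL)ᵀ * swingCphase n hL) ∧
    ((swingF n M)ᵀ * swingPphase n M D L * swingF n M).trace = n / (2 * D) := by
  have hLt : Lᵀ = L := hL.1.eq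
  refine ⟨?_, trace_swingF_transpose_mul_swingPphase_mul hM.ne'⟩
  rw [swingCphase_transpose_mul_self, swingA_transpose_mul_swingPphase hLt,
    swingPphase_mul_swingA hM.ne' hD.ne', fromBlocks_transpose, fromBlocks_add, fromBlocks_neg]
  simp only [transpose_smul, hLt, transpose_zero, neg_zero]
  congr 1 <;> module
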